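/- arXiv:1609.02446 — 2 statements merged into one kernel-verified Lean document; each statement's English description precedes it below -/
import Mathlib

section
/- Let a, b > 0 and let X be a real random variable whose law is the Gamma distribution with shape a and scale b. Let ρ ∈ (0, 1), θ > 0, P_PR > 0 and σ² ≥ 0, and let q > 0 be the unique positive real with ℙ(X ≥ q) = ρ. Assume q > σ². Then for every P > 0, the outage constraint ℙ(P · (X − σ²)/P_PR ≥ θ) ≤ ρ holds if and only if P ≤ θ P_PR / (q − σ²). (This is the content of Lemma 4: the controlled power below the transmit power cap equals θ P_PR / (b Γ^{−1}(ρ_out, a) − σ²), where q = b Γ^{−1}(ρ_out, a).) -/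
open MeasureTheory ProbabilityTheory Real Set
open scoped NNReal ENNReal

/-- The Gamma distribution with shape `a > 0` and scale `b > 0`:
the measure on `ℝ` with density `x ↦ x^(a-1) * exp (-x/b) / (Γ a * b^a)` on `(0, ∞)`
and `0` elsewhere. -/
noncomputable def gammaScaleMeasure (a b : ℝ) : Measure ℝ :=
  volume.withDensity fun x =>
    ENNReal.ofReal (if 0 < x then x ^ (a - 1) * Real.exp (-(x / b)) / (Real.Gamma a * b ^ a) else 0)

lemma gamma_Ico_ne_zero (a b : ℝ) (ha : 0 < a) (hb : 0 < b) {s u : ℝ}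
    (hs : 0 < s) (hsu : s < u) : gammaScaleMeasure a b (Set.Ico s u) ≠ 0 := by
  rw [gammaScaleMeasure, withDensity_apply _ measurableSet_Ico]
  intro h0
  have hf : Measurable (fun x : ℝ => ENNReal.ofReal
      (if 0 < x then x ^ (a - 1) * Real.exp (-(x / b)) / (Real.Gamma a * b ^ a) else 0)) := by
    apply Measurable.ennreal_ofReal
    apply Measurable.ite measurableSet_Ioi _ measurable_const
    fun_prop
  rw [lintegral_eq_zero_iff hf] at h0
  have h2 := (ae_restrict_iff' measurableSet_Ico).mp h0
  rw [ae_iff] at h2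
  have hpos : ∀ x ∈ Set.Ico s u, ENNReal.ofReal
      (if 0 < x then x ^ (a - 1) * Real.exp (-(x / b)) / (Real.Gamma a * b ^ a) else 0) ≠ 0 := by
    intro x hx
    have hx0 : 0 < x := lt_of_lt_of_le hs hx.1
    rw [if_pos hx0]
    have : 0 < x ^ (a - 1) * Real.exp (-(x / b)) / (Real.Gamma a * b ^ a) :=
      div_pos (mul_pos (Real.rpow_pos_of_pos hx0 _) (Real.exp_pos _))
        (mul_pos (Real.Gamma_pos_of_pos ha) (Real.rpow_pos_of_pos hb a))
    exact (ENNReal.ofReal_pos.mpr this).ne'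
  have hzero : volume (Set.Ico s u) = 0 := by
    refine measure_mono_null ?_ h2
    intro x hx
    simp only [Set.mem_setOf_eq, _root_.not_imp, Pi.zero_apply]
    exact ⟨hx, hpos x hx⟩
  rw [Real.volume_Ico] at hzero
  exact absurd hzero (by simp [hsu, sub_pos.mpr hsu])

/-- Let `X` have the Gamma law with shape `a` and scale `b`, let
`ρ ∈ (0,1)`, `θ > 0`, `P_PR > 0`, `σ² ≥ 0`, and let `q > 0` be the unique positive real with
`ℙ(X ≥ q) = ρ`; assume `q > σ²`. Then for every `P > 0`, the outage constraint
`ℙ(P (X - σ²) / P_PR ≥ θ) ≤ ρ` holds iff `P ≤ θ P_PR / (q - σ²)`. -/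
theorem controlled_power_outage_iff {Ω : Type*} [MeasurableSpace Ω] (μ : Measure Ω)
    [IsProbabilityMeasure μ] (a b : ℝ) (ha : 0 < a) (hb : 0 < b)
    (X : Ω → ℝ) (hX : Measure.map X μ = gammaScaleMeasure a b)
    (ρ θ PPR σ2 q : ℝ) (hρ : ρ ∈ Set.Ioo (0 : ℝ) 1) (hθ : 0 < θ) (hPPR : 0 < PPR)
    (hσ2 : 0 ≤ σ2) (hq : 0 < q)
    (hqρ : μ {ω | q ≤ X ω} = ENNReal.ofReal ρ) (hqσ2 : σ2 < q) :
    ∀ P : ℝ, 0 < P →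
      (μ {ω | θ ≤ P * (X ω - σ2) / PPR} ≤ ENNReal.ofReal ρ ↔
        P ≤ θ * PPR / (q - σ2)) := by
  intro P hP
  set t : ℝ := σ2 + θ * PPR / P with ht_def
  have htpos : 0 < t := add_pos_of_nonneg_of_pos hσ2 (by positivity)
  have hXm : AEMeasurable X μ := by
    by_contra h
    rw [Measure.map_of_not_aemeasurable h] at hX
    exact gamma_Ico_ne_zero a b ha hb one_pos one_lt_two (by rw [← hX]; simp)
  have key : ∀ r : ℝ, μ {ω | r ≤ X ω} = gammaScaleMeasure a b (Set.Ici r) := by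
    intro r
    rw [← hX, Measure.map_apply_of_aemeasurable hXm measurableSet_Ici]
    rfl
  have hset : {ω | θ ≤ P * (X ω - σ2) / PPR} = {ω | t ≤ X ω} := by
    ext ω
    simp only [Set.mem_setOf_eq, ht_def]
    rw [le_div_iff₀ hPPR]
    constructor
    · intro h
      have h2 : θ * PPR / P ≤ X ω - σ2 := by
        rw [div_le_iff₀ hP]; nlinarith
      linarith
    · intro h
      have h2 : θ * PPR / P ≤ X ω - σ2 := by linarith
      rw [div_le_iff₀ hP] at h2; nlinarith
  have hRHS : (P ≤ θ * PPR / (q - σ2)) ↔ q ≤ t := by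
    rw [le_div_iff₀ (sub_pos.mpr hqσ2)]
    constructor
    · intro h
      have h2 : q - σ2 ≤ θ * PPR / P := by rw [le_div_iff₀ hP]; nlinarith
      simp only [ht_def]; linarith
    · intro h
      have h2 : q - σ2 ≤ θ * PPR / P := by simp only [ht_def] at h; linarith
      rw [le_div_iff₀ hP] at h2; nlinarith
  rw [hset, key t, hRHS]
  rw [key q] at hqρ
  rcases le_or_gt q t with hqt | htq
  · constructor
    · intro _; exact hqt
    · intro _
      rw [← hqρ]
      exact measure_mono (Set.Ici_subset_Ici.mpr hqt)
  · constructor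
    · intro hle
      exfalso
      have hunion : Set.Ico t q ∪ Set.Ici q = Set.Ici t := Set.Ico_union_Ici_eq_Ici htq.le
      have hdisj : Disjoint (Set.Ico t q) (Set.Ici q) := by
        rw [Set.disjoint_left]; intro x hx hx'; exact absurd hx.2 (not_lt.mpr hx')
      have hsum := measure_union (μ := gammaScaleMeasure a b) hdisj measurableSet_Ici
      rw [hunion, hqρ] at hsum
      rw [hsum] at hle
      have hne : gammaScaleMeasure a b (Set.Ico t q) ≠ 0 := gamma_Ico_ne_zero a b ha hb htpos htq
      have hlt : ENNReal.ofReal ρ < gammaScaleMeasure a b (Set.Ico t q) + ENNReal.ofReal ρ := by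
        rw [add_comm]
        exact ENNReal.lt_add_right ENNReal.ofReal_ne_top hne
      exact absurd hle (not_le.mpr hlt)
    · intro h; exact absurd h (not_le.mpr htq)
end

section
/- Let a_s, b_s, a_p, b_p > 0 and P > 0, and let X and Y be independent real random variables with X having the Gamma distribution with shape a_s and scale b_s, and Y having the Gamma distribution with shape a_p and scale b_p. Then the estimated data rate Ĉ = log₂(1 + P·X/Y) has a law absolutely continuous with respect to Lebesgue measure, with density f(x) = 2^x ln 2 · (2^x − 1)^{a_s − 1} · Γ(a_s + a_p) / (Γ(a_s) Γ(a_p) (b_s P)^{a_s} b_p^{a_p}) · (1/b_p + (2^x − 1)/(b_s P))^{−(a_s + a_p)} for x > 0 and f(x) = 0 for x ≤ 0. (This is the density of Ĉ_s claimed in Lemma 5, with the exponent −(a_s + a_p) on the last factor making the formula a probability density.) -/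
open MeasureTheory ProbabilityTheory Real Set
open scoped NNReal ENNReal

/-!
Given `Y = y > 0`, the map `x ↦ log_b (1 + P x / y)` is a bijection of `(0, ∞)` onto itself
with inverse `t ↦ (y / P) (bᵗ - 1)`, so the one-dimensional change of variables gives the
conditional density of `Ĉ`. Integrating it against the law of `Y` (Tonelli), the integrand in
`y` is a constant multiple of a `Γ(a_s + a_p)` density; what remains is the density of the ratio
`X / Y` of independent Gamma variables at `(bᵗ - 1) / P`, times the Jacobian `bᵗ log b / P`.
-/

@[fun_prop]
lemma measurable_logb (b : ℝ) : Measurable (logb b) :=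
  measurable_log.div_const _

@[fun_prop]
lemma measurable_gammaPDF (a r : ℝ) : Measurable (gammaPDF a r) :=
  (measurable_gammaPDFReal a r).ennreal_ofReal

lemma withDensity_eq_restrict_Ioi_withDensity {f : ℝ → ℝ≥0∞} (hf : ∀ x < 0, f x = 0) :
    volume.withDensity f = (volume.restrict (Ioi 0)).withDensity f := by
  rw [← withDensity_indicator measurableSet_Ioi]
  refine withDensity_congr_ae ?_
  filter_upwards [Measure.ae_ne volume 0] with x hx
  rcases hx.lt_or_gt with hx | hx
  · simp [hf x hx, hx.not_gt]
  · simp [hx]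

lemma gammaMeasure_eq_restrict_Ioi_withDensity (a r : ℝ) :
    gammaMeasure a r = (volume.restrict (Ioi 0)).withDensity (gammaPDF a r) :=
  withDensity_eq_restrict_Ioi_withDensity fun _ => gammaPDF_of_neg

lemma ae_pos_gammaMeasure (a r : ℝ) : ∀ᵐ y ∂gammaMeasure a r, 0 < y := by
  rw [gammaMeasure_eq_restrict_Ioi_withDensity]
  exact withDensity_absolutelyContinuous _ _ (ae_restrict_mem measurableSet_Ioi)

lemma gammaScaleMeasure_eq_gammaMeasure {a b : ℝ} (hb : 0 < b) :
    gammaScaleMeasure a b = gammaMeasure a b⁻¹ := by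
  rw [gammaMeasure_eq_restrict_Ioi_withDensity, gammaScaleMeasure,
    withDensity_eq_restrict_Ioi_withDensity fun x hx => by simp [hx.not_gt]]
  refine withDensity_congr_ae
    ((ae_restrict_iff' measurableSet_Ioi).2 (ae_of_all _ fun x (hx : 0 < x) => ?_))
  simp only [gammaPDF_of_nonneg hx.le, if_pos hx]
  rw [inv_rpow hb.le, div_eq_inv_mul x b]
  congr 1
  field_simp

lemma map_prod_eq_withDensity_lintegral {α β γ : Type*} [MeasurableSpace α] [MeasurableSpace β]
    [MeasurableSpace γ] {μ : Measure α} {ν : Measure β} [SFinite μ] [SFinite ν] {ρ : Measure γ}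
    [SFinite ρ] {φ : α × β → γ} (hφ : Measurable φ) {k : β → γ → ℝ≥0∞}
    (hk : Measurable (Function.uncurry k))
    (h : ∀ᵐ y ∂ν, μ.map (fun x => φ (x, y)) = ρ.withDensity (k y)) :
    (μ.prod ν).map φ = ρ.withDensity fun z => ∫⁻ y, k y z ∂ν := by
  ext s hs
  rw [Measure.map_apply hφ hs, Measure.prod_apply_symm (hφ hs), withDensity_apply _ hs]
  calc ∫⁻ y, μ ((fun x => (x, y)) ⁻¹' (φ ⁻¹' s)) ∂ν = ∫⁻ y, ∫⁻ z in s, k y z ∂ρ ∂ν :=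
        lintegral_congr_ae <| h.mono fun y hy => by
          dsimp only
          rw [← withDensity_apply _ hs, ← hy, Measure.map_apply (by fun_prop) hs,
            preimage_preimage]
    _ = _ := lintegral_lintegral_swap hk.aemeasurable

lemma preimage_logb_one_add_div_inter_Ioi {b c : ℝ} (hb : 1 < b) (hc : 0 < c) (s : Set ℝ) :
    (fun x => logb b (1 + x / c)) ⁻¹' s ∩ Ioi 0 = (fun t => c * (b ^ t - 1)) '' (s ∩ Ioi 0) := by
  ext x
  simp only [mem_inter_iff, mem_preimage, mem_Ioi, mem_image]
  constructor
  · rintro ⟨hxs, hx⟩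
    refine ⟨_, ⟨hxs, logb_pos hb (by linarith [div_pos hx hc])⟩, ?_⟩
    rw [rpow_logb (by positivity) hb.ne' (by positivity)]
    field_simp
    ring
  · rintro ⟨t, ⟨hts, ht⟩, rfl⟩
    have : 1 < b ^ t := one_lt_rpow hb ht
    refine ⟨?_, by nlinarith⟩
    rwa [mul_div_cancel_left₀ _ hc.ne', add_sub_cancel, logb_rpow (by positivity) hb.ne']

lemma map_logb_one_add_div_withDensity {b c : ℝ} {f : ℝ → ℝ≥0∞} (hf : ∀ x < 0, f x = 0)
    (hb : 1 < b) (hc : 0 < c) :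
    (volume.withDensity f).map (fun x => logb b (1 + x / c)) =
      volume.withDensity ((Ioi 0).indicator fun t =>
        ENNReal.ofReal (c * (b ^ t * log b)) * f (c * (b ^ t - 1))) := by
  have hmeas : Measurable fun x => logb b (1 + x / c) := by fun_prop
  ext s hs
  have hS : MeasurableSet (s ∩ Ioi 0) := hs.inter measurableSet_Ioi
  have hderiv : ∀ t ∈ s ∩ Ioi 0, HasDerivWithinAt (fun t => c * (b ^ t - 1))
      (c * (b ^ t * log b)) (s ∩ Ioi 0) t := fun t _ =>
    (((hasStrictDerivAt_const_rpow (by positivity) t).hasDerivAt.sub_const 1).const_mul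
      c).hasDerivWithinAt
  have hinj : InjOn (fun t => c * (b ^ t - 1)) (s ∩ Ioi 0) := fun t _ t' _ h =>
    (rpow_right_inj (by positivity) hb.ne').1 (by simpa [hc.ne'] using h)
  rw [Measure.map_apply hmeas hs, withDensity_eq_restrict_Ioi_withDensity hf,
    withDensity_apply _ (hmeas hs), Measure.restrict_restrict (hmeas hs),
    preimage_logb_one_add_div_inter_Ioi hb hc,
    lintegral_image_eq_lintegral_abs_deriv_mul hS hderiv hinj, withDensity_apply _ hs,
    setLIntegral_indicator measurableSet_Ioi, inter_comm (Ioi 0) s]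
  have hlog := log_pos hb
  exact setLIntegral_congr_fun hS fun t _ => by rw [abs_of_nonneg (by positivity)]

/-- The density at `u ≥ 0` of `X / Y` for independent `X ~ Γ(a, rate r)` and
`Y ~ Γ(a', rate r')`, a scaled beta prime density. -/
noncomputable def gammaRatioPDFReal (a r a' r' u : ℝ) : ℝ :=
  Gamma (a + a') / (Gamma a * Gamma a') * r ^ a * r' ^ a' * u ^ (a - 1) / (r' + r * u) ^ (a + a')

lemma gammaPDF_mul_ofReal_mul_gammaPDF_mul {a r a' r' u y : ℝ} (ha : 0 < a) (hr : 0 < r)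
    (ha' : 0 < a') (hr' : 0 < r') (hu : 0 ≤ u) (hy : y ≠ 0) :
    gammaPDF a' r' y * (ENNReal.ofReal y * gammaPDF a r (y * u)) =
      ENNReal.ofReal (gammaRatioPDFReal a r a' r' u) * gammaPDF (a + a') (r' + r * u) y := by
  rcases hy.lt_or_gt with hy | hy
  · simp [gammaPDF_of_neg hy]
  have hl : 0 < r' + r * u := by positivity
  rw [gammaPDF_of_nonneg hy.le, gammaPDF_of_nonneg (by positivity), gammaPDF_of_nonneg hy.le,
    ← ENNReal.ofReal_mul (by positivity), ← ENNReal.ofReal_mul (by positivity),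
    ← ENNReal.ofReal_mul (by unfold gammaRatioPDFReal; positivity)]
  congr 1
  have hexp : exp (-(r' * y)) * exp (-(r * (y * u))) = exp (-((r' + r * u) * y)) := by
    rw [← exp_add]
    ring_nf
  have hpow : y ^ (a' - 1) * y * (y * u) ^ (a - 1) = y ^ (a + a' - 1) * u ^ (a - 1) := by
    rw [mul_rpow hy.le hu, show a + a' - 1 = (a' - 1) + 1 + (a - 1) by ring,
      rpow_add hy, rpow_add hy, rpow_one]
    ring
  have := (Gamma_pos_of_pos ha).ne'
  have := (Gamma_pos_of_pos ha').ne'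
  have := (Gamma_pos_of_pos (add_pos ha ha')).ne'
  have := (rpow_pos_of_pos hl (a + a')).ne'
  unfold gammaRatioPDFReal
  calc _ = r' ^ a' / Gamma a' * (r ^ a / Gamma a) * (y ^ (a' - 1) * y * (y * u) ^ (a - 1))
        * (exp (-(r' * y)) * exp (-(r * (y * u)))) := by ring
    _ = _ := by rw [hexp, hpow]; field_simp

lemma lintegral_gammaPDF_mul_ofReal_mul_gammaPDF_mul {a r a' r' u : ℝ} (ha : 0 < a)
    (hr : 0 < r) (ha' : 0 < a') (hr' : 0 < r') (hu : 0 ≤ u) :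
    ∫⁻ y, gammaPDF a' r' y * (ENNReal.ofReal y * gammaPDF a r (y * u)) =
      ENNReal.ofReal (gammaRatioPDFReal a r a' r' u) := by
  calc _ = ∫⁻ y, ENNReal.ofReal (gammaRatioPDFReal a r a' r' u) *
        gammaPDF (a + a') (r' + r * u) y :=
        lintegral_congr_ae <| (Measure.ae_ne volume 0).mono fun y hy =>
          gammaPDF_mul_ofReal_mul_gammaPDF_mul ha hr ha' hr' hu hy
    _ = _ := by
      rw [lintegral_const_mul' _ _ ENNReal.ofReal_ne_top,
        lintegral_gammaPDF_eq_one (add_pos ha ha') (by positivity), mul_one]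

lemma gammaRatioPDFReal_inv_inv_div_div {a a' b b' P w : ℝ} (hb : 0 < b) (hb' : 0 < b')
    (hP : 0 < P) (hw : 0 ≤ w) :
    gammaRatioPDFReal a b⁻¹ a' b'⁻¹ (w / P) / P =
      w ^ (a - 1) * Gamma (a + a') / (Gamma a * Gamma a' * (b * P) ^ a * b' ^ a') *
        (1 / b' + w / (b * P)) ^ (-(a + a')) := by
  have hsum : b'⁻¹ + b⁻¹ * (w / P) = 1 / b' + w / (b * P) := by field_simp
  have hPa : P ^ a = P ^ (a - 1) * P := by rw [← rpow_add_one hP.ne', sub_add_cancel]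
  rw [gammaRatioPDFReal, hsum, rpow_neg (by positivity), inv_rpow hb.le, inv_rpow hb'.le,
    div_rpow hw hP.le, mul_rpow hb.le hP.le, hPa]
  have := rpow_pos_of_pos hP (a - 1)
  have := rpow_pos_of_pos hb a
  have := rpow_pos_of_pos hb' a'
  field_simp

lemma map_logb_one_add_mul_div_gammaMeasure_prod {a r a' r' b P : ℝ} (ha : 0 < a)
    (hr : 0 < r) (ha' : 0 < a') (hr' : 0 < r') (hb : 1 < b) (hP : 0 < P) :
    ((gammaMeasure a r).prod (gammaMeasure a' r')).map (fun p => logb b (1 + P * p.1 / p.2)) =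
      volume.withDensity ((Ioi 0).indicator fun t =>
        ENNReal.ofReal (b ^ t * log b / P * gammaRatioPDFReal a r a' r' ((b ^ t - 1) / P))) := by
  have := isProbabilityMeasure_gammaMeasure ha hr
  have := isProbabilityMeasure_gammaMeasure ha' hr'
  let k : ℝ → ℝ → ℝ≥0∞ := fun y => (Ioi 0).indicator fun t =>
    ENNReal.ofReal (b ^ t * log b / P) * (ENNReal.ofReal y * gammaPDF a r (y * ((b ^ t - 1) / P)))
  have hk : Measurable (Function.uncurry k) :=
    Measurable.indicator (by fun_prop) (measurableSet_Ioi.preimage measurable_snd)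
  have hsection : ∀ᵐ y ∂gammaMeasure a' r',
      (gammaMeasure a r).map (fun x => logb b (1 + P * x / y)) = volume.withDensity (k y) := by
    filter_upwards [ae_pos_gammaMeasure a' r'] with y hy
    have hlog := log_pos hb
    rw [show (fun x => logb b (1 + P * x / y)) = fun x => logb b (1 + x / (y / P)) by
        funext x; field_simp,
      gammaMeasure, map_logb_one_add_div_withDensity (fun _ => gammaPDF_of_neg) hb (by positivity)]
    congr 1
    refine indicator_congr fun t _ => ?_
    rw [← mul_assoc (ENNReal.ofReal _), ← ENNReal.ofReal_mul (by positivity)]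
    congr 2 <;> ring
  rw [map_prod_eq_withDensity_lintegral (by fun_prop) hk hsection]
  congr 1
  funext t
  by_cases ht : 0 < t
  · have hu : 0 ≤ (b ^ t - 1) / P := div_nonneg (sub_nonneg.2 (one_le_rpow hb.le ht.le)) hP.le
    simp only [k, indicator_of_mem (mem_Ioi.2 ht)]
    rw [lintegral_const_mul' _ _ ENNReal.ofReal_ne_top, gammaMeasure,
      lintegral_withDensity_eq_lintegral_mul _ (measurable_gammaPDF _ _) (by fun_prop)]
    simp only [Pi.mul_apply]
    rw [lintegral_gammaPDF_mul_ofReal_mul_gammaPDF_mul ha hr ha' hr' hu,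
      ← ENNReal.ofReal_mul (div_nonneg (mul_nonneg (by positivity) (log_pos hb).le) hP.le)]
  · simp [k, ht]

/-- Let `X` and `Y` be independent with `X` Gamma (shape `a_s`, scale `b_s`)
and `Y` Gamma (shape `a_p`, scale `b_p`), and `P > 0`. Then the estimated data rate
`Ĉ = log₂ (1 + P X / Y)` has density
`x ↦ 2^x ln 2 · (2^x - 1)^(a_s - 1) · Γ(a_s + a_p) / (Γ(a_s) Γ(a_p) (b_s P)^(a_s) b_p^(a_p)) ·
(1/b_p + (2^x - 1)/(b_s P))^(-(a_s + a_p))` for `x > 0` and `0` for `x ≤ 0`. -/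
theorem estimated_rate_density {Ω : Type*} [MeasurableSpace Ω] (μ : Measure Ω)
    [IsProbabilityMeasure μ] (as bs ap bp P : ℝ)
    (has : 0 < as) (hbs : 0 < bs) (hap : 0 < ap) (hbp : 0 < bp) (hP : 0 < P)
    (X Y : Ω → ℝ) (hindep : IndepFun X Y μ)
    (hX : Measure.map X μ = gammaScaleMeasure as bs)
    (hY : Measure.map Y μ = gammaScaleMeasure ap bp) :
    Measure.map (fun ω => Real.logb 2 (1 + P * X ω / Y ω)) μ =
      volume.withDensity fun x =>
        ENNReal.ofReal (if 0 < x then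
          (2 : ℝ) ^ x * Real.log 2 * ((2 : ℝ) ^ x - 1) ^ (as - 1) * Real.Gamma (as + ap) /
              (Real.Gamma as * Real.Gamma ap * (bs * P) ^ as * bp ^ ap) *
            (1 / bp + ((2 : ℝ) ^ x - 1) / (bs * P)) ^ (-(as + ap))
        else 0) := by
  rw [gammaScaleMeasure_eq_gammaMeasure hbs] at hX
  rw [gammaScaleMeasure_eq_gammaMeasure hbp] at hY
  have hXm : AEMeasurable X μ := .of_map_ne_zero <| by
    rw [hX]; exact (isProbabilityMeasure_gammaMeasure has (inv_pos.2 hbs)).ne_zero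
  have hYm : AEMeasurable Y μ := .of_map_ne_zero <| by
    rw [hY]; exact (isProbabilityMeasure_gammaMeasure hap (inv_pos.2 hbp)).ne_zero
  have hφ : Measurable fun p : ℝ × ℝ => logb 2 (1 + P * p.1 / p.2) := by fun_prop
  refine (AEMeasurable.map_map_of_aemeasurable hφ.aemeasurable (hXm.prodMk hYm)).symm.trans ?_
  rw [(indepFun_iff_map_prod_eq_prod_map_map hXm hYm).1 hindep, hX, hY,
    map_logb_one_add_mul_div_gammaMeasure_prod has (inv_pos.2 hbs) hap (inv_pos.2 hbp)
      one_lt_two hP]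
  congr 1
  funext t
  by_cases ht : 0 < t
  · have hw : 0 ≤ (2 : ℝ) ^ t - 1 := sub_nonneg.2 (one_le_rpow one_le_two ht.le)
    rw [indicator_of_mem (mem_Ioi.2 ht), if_pos ht, div_mul_eq_mul_div, mul_div_assoc,
      gammaRatioPDFReal_inv_inv_div_div hbs hbp hP hw]
    congr 1
    ring
  · simp [ht]
end
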